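/- Let P ∈ ℝⁿˣⁿ, Q ∈ ℝᵐˣᵐ be symmetric positive semi-definite, T ∈ ℝⁿˣⁿ, R ∈ ℝᵐˣⁿ. If (x ⊕ y)ᵀ lies in E†([[P,Rᵀ],[R,Q]]) (reverse form), then (Tx ⊕ y) lies in E†([[TPTᵀ, TRᵀ],[RTᵀ, Q]]). -/

import Mathlib

/-! Conjugating the block matrix `[[1, zᵀ], [z, M]]` by `diag(1, A)` gives `[[1, (Az)ᵀ], [Az, AMAᵀ]]`,
so congruence preserves membership `z ∈ E†(M)` under any linear map `A`. The partial update is the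
case `A = diag(T, I)`, which maps `x ⊕ y` to `Tx ⊕ y` and `[[P, Rᵀ], [R, Q]]` to
`[[TPTᵀ, TRᵀ], [RTᵀ, Q]]`. -/

open Matrix

def reverseEllipsoid {ι : Type*} [Fintype ι] (M : Matrix ι ι ℝ) : Set (ι → ℝ) :=
  {z | (fromBlocks (1 : Matrix (Fin 1) (Fin 1) ℝ) (replicateRow (Fin 1) z)
    (replicateCol (Fin 1) z) M).PosSemidef}

theorem mulVec_mem_reverseEllipsoid {ι κ : Type*} [Fintype ι] [Fintype κ] {M : Matrix ι ι ℝ}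
    {z : ι → ℝ} (hz : z ∈ reverseEllipsoid M) (A : Matrix κ ι ℝ) :
    A *ᵥ z ∈ reverseEllipsoid (A * M * Aᵀ) := by
  set B : Matrix (Fin 1 ⊕ κ) (Fin 1 ⊕ ι) ℝ := fromBlocks 1 0 0 A
  have hconj : fromBlocks 1 (replicateRow (Fin 1) (A *ᵥ z)) (replicateCol (Fin 1) (A *ᵥ z))
      (A * M * Aᵀ) = B * fromBlocks 1 (replicateRow (Fin 1) z) (replicateCol (Fin 1) z) M * Bᵀ := by
    simp [B, fromBlocks_transpose, fromBlocks_multiply, replicateCol_mulVec, replicateRow_mulVec]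
  rw [reverseEllipsoid, Set.mem_ofPred_eq, hconj, ← conjTranspose_eq_transpose_of_trivial]
  exact hz.mul_mul_conjTranspose_same B

section PartialUpdate

variable {α m n : Type*} [CommSemiring α] [Fintype m] [Fintype n] [DecidableEq n]

def partialUpdate (T : Matrix m m α) : Matrix (m ⊕ n) (m ⊕ n) α :=
  fromBlocks T 0 0 1

theorem partialUpdate_mulVec_sum_elim (T : Matrix m m α) (x : m → α) (y : n → α) :
    partialUpdate T *ᵥ Sum.elim x y = Sum.elim (T *ᵥ x) y := by
  simp [partialUpdate, fromBlocks_mulVec]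

theorem partialUpdate_mul_fromBlocks_mul_transpose (T P : Matrix m m α) (R : Matrix n m α)
    (Q : Matrix n n α) :
    partialUpdate T * fromBlocks P Rᵀ R Q * (partialUpdate T)ᵀ =
      fromBlocks (T * P * Tᵀ) (T * Rᵀ) (R * Tᵀ) Q := by
  simp [partialUpdate, fromBlocks_transpose, fromBlocks_multiply, Matrix.mul_assoc]

end PartialUpdate

theorem partial_update_reverse_general (n m : ℕ)
    (P : Matrix (Fin n) (Fin n) ℝ) (Q : Matrix (Fin m) (Fin m) ℝ)
    (T : Matrix (Fin n) (Fin n) ℝ) (R : Matrix (Fin m) (Fin n) ℝ)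
    (x : Fin n → ℝ) (y : Fin m → ℝ)
    (hxy : (Matrix.fromBlocks (1 : Matrix (Fin 1) (Fin 1) ℝ)
      (Matrix.replicateRow (Fin 1) (Sum.elim x y)) (Matrix.replicateCol (Fin 1) (Sum.elim x y))
      (Matrix.fromBlocks P Rᵀ R Q)).PosSemidef) :
    (Matrix.fromBlocks (1 : Matrix (Fin 1) (Fin 1) ℝ)
      (Matrix.replicateRow (Fin 1) (Sum.elim (T.mulVec x) y))
      (Matrix.replicateCol (Fin 1) (Sum.elim (T.mulVec x) y))
      (Matrix.fromBlocks (T * P * Tᵀ) (T * Rᵀ) (R * Tᵀ) Q)).PosSemidef := by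
  have h := mulVec_mem_reverseEllipsoid (z := Sum.elim x y) hxy (partialUpdate (n := Fin m) T)
  rwa [partialUpdate_mulVec_sum_elim, partialUpdate_mul_fromBlocks_mul_transpose] at h

theorem partial_update_reverse (n m : ℕ)
    (P : Matrix (Fin n) (Fin n) ℝ) (Q : Matrix (Fin m) (Fin m) ℝ)
    (hP : P.PosSemidef) (hQ : Q.PosSemidef)
    (T : Matrix (Fin n) (Fin n) ℝ) (R : Matrix (Fin m) (Fin n) ℝ)
    (x : Fin n → ℝ) (y : Fin m → ℝ)
    (hxy : (Matrix.fromBlocks (1 : Matrix (Fin 1) (Fin 1) ℝ)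
      (Matrix.replicateRow (Fin 1) (Sum.elim x y)) (Matrix.replicateCol (Fin 1) (Sum.elim x y))
      (Matrix.fromBlocks P Rᵀ R Q)).PosSemidef) :
    (Matrix.fromBlocks (1 : Matrix (Fin 1) (Fin 1) ℝ)
      (Matrix.replicateRow (Fin 1) (Sum.elim (T.mulVec x) y))
      (Matrix.replicateCol (Fin 1) (Sum.elim (T.mulVec x) y))
      (Matrix.fromBlocks (T * P * Tᵀ) (T * Rᵀ) (R * Tᵀ) Q)).PosSemidef :=
  partial_update_reverse_general n m P Q T R x y hxy
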